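/- arXiv:2403.16772 — 2 statements merged into one kernel-verified Lean document; each statement's English description precedes it below -/
import Mathlib

section
/- Divergence of the second Picard iterate for H^s potentials (core of Theorem 1.5): Let s ≥ 0, γ > 2, and β with 1/2 < β < γ − 3/2. Then for every positive integer M₀, setting t = (π/2) M₀^{−2}, the series Σ_{k=1}^∞ (1+k²)^{s+γ} k^{−(4+2s+2β)} |e^{itk²} − 1|² diverges. -/
/-!
Along the odd multiples `k = M₀ (2m + 1)` the phase is `t k² = 2π m (m + 1) + π / 2`, so
`|e^{itk²} − 1|² = |i − 1|² = 2`. There the summand is at least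
`k^{2(s+γ)} k^{−(4+2s+2β)} = k^{2γ−2β−4} ≥ k⁻¹`, and the harmonic series over an arithmetic
progression diverges.
-/

open Real

theorem Complex.exp_I_mul_pi_div_two_mul_odd_sq (m : ℕ) :
    Complex.exp (Complex.I * ((π / 2 * (2 * m + 1) ^ 2 : ℝ) : ℂ)) = Complex.I := by
  have hphase : Complex.I * ((π / 2 * (2 * m + 1) ^ 2 : ℝ) : ℂ) =
      (m * (m + 1) : ℕ) * (2 * π * Complex.I) + π / 2 * Complex.I := by
    push_cast
    ring
  rw [hphase, Complex.exp_add, Complex.exp_nat_mul_two_pi_mul_I, Complex.exp_pi_div_two_mul_I,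
    one_mul]

theorem Complex.exp_I_mul_phase_odd_multiple {M : ℕ} (hM : M ≠ 0) (m : ℕ) :
    Complex.exp (Complex.I *
      ((π / 2 * ((M : ℝ) ^ 2)⁻¹ * ((M * (2 * m + 1) : ℕ) : ℝ) ^ 2 : ℝ) : ℂ)) = Complex.I := by
  have hM' : (M : ℝ) ≠ 0 := Nat.cast_ne_zero.mpr hM
  convert Complex.exp_I_mul_pi_div_two_mul_odd_sq m using 4
  push_cast
  field_simp

theorem Complex.norm_I_sub_one_sq : ‖Complex.I - 1‖ ^ 2 = 2 := by
  rw [Complex.sq_norm, Complex.normSq_apply]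
  norm_num

theorem inv_le_one_add_sq_rpow_mul_rpow_neg {x a b : ℝ} (hx : 1 ≤ x) (ha : 0 ≤ a)
    (hab : -1 ≤ 2 * a - b) : x⁻¹ ≤ (1 + x ^ 2) ^ a * x ^ (-b) := by
  have hx0 : 0 < x := one_pos.trans_le hx
  calc x⁻¹ = x ^ (-1 : ℝ) := (rpow_neg_one x).symm
    _ ≤ x ^ (2 * a - b) := rpow_le_rpow_of_exponent_le hx hab
    _ = (x ^ 2) ^ a * x ^ (-b) := by
      rw [← rpow_natCast x 2, ← rpow_mul hx0.le, ← rpow_add hx0]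
      ring_nf
    _ ≤ (1 + x ^ 2) ^ a * x ^ (-b) := by
      gcongr
      linarith

theorem not_summable_of_inv_le_odd_multiples {f : ℕ → ℝ} {M : ℕ} (hM : 0 < M)
    (h : ∀ m : ℕ, ((M * (2 * m + 1) : ℕ) : ℝ)⁻¹ ≤ f (M * (2 * m + 1))) : ¬ Summable f := by
  intro hf
  have hmono : StrictMono fun m : ℕ => M * (2 * m + 1) := fun a b hab => by
    dsimp only
    gcongr
  -- `(M (2m + 1))⁻¹ ≥ (3M)⁻¹ m⁻¹` holds also at `m = 0`, where `m⁻¹ = 0`.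
  have hharmonic : ∀ m : ℕ, (3 * M : ℝ)⁻¹ * (m : ℝ)⁻¹ ≤ f (M * (2 * m + 1)) := by
    intro m
    refine le_trans ?_ (h m)
    rw [← mul_inv]
    rcases m.eq_zero_or_pos with rfl | hm
    · simp
    · gcongr
      push_cast
      nlinarith [(Nat.cast_pos.mpr hM : (0 : ℝ) < M), (Nat.one_le_cast.mpr hm : (1 : ℝ) ≤ m)]
  have hsum := (hf.comp_injective hmono.injective).of_nonneg_of_le (fun m => by positivity)
    hharmonic
  rw [summable_mul_left_iff (by positivity)] at hsum
  exact not_summable_natCast_inv hsum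

theorem second_iterate_not_summable_Hs_general (s γ β : ℝ) (hs : 0 ≤ s) (hγ : 2 < γ)
    (hβ2 : β < γ - 3 / 2) (M₀ : ℕ) (hM : 0 < M₀) :
    ¬ Summable (fun k : ℕ =>
      (1 + ((k : ℝ) + 1) ^ 2) ^ (s + γ) *
        ((k : ℝ) + 1) ^ (-(4 + 2 * s + 2 * β)) *
        ‖Complex.exp (Complex.I *
            (((Real.pi / 2) * ((M₀ : ℝ) ^ 2)⁻¹ * ((k : ℝ) + 1) ^ 2 : ℝ) : ℂ)) - 1‖ ^ 2) := by
  set F : ℝ → ℝ := fun x => (1 + x ^ 2) ^ (s + γ) * x ^ (-(4 + 2 * s + 2 * β)) *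
    ‖Complex.exp (Complex.I * ((π / 2 * ((M₀ : ℝ) ^ 2)⁻¹ * x ^ 2 : ℝ) : ℂ)) - 1‖ ^ 2
  have hshift : (fun k : ℕ => F ((k : ℝ) + 1)) = fun k : ℕ => F ((k + 1 : ℕ) : ℝ) := by
    simp only [Nat.cast_add, Nat.cast_one]
  rw [hshift, summable_nat_add_iff 1 (f := fun n : ℕ => F n)]
  refine not_summable_of_inv_le_odd_multiples hM fun m => ?_
  have hk : (1 : ℝ) ≤ ((M₀ * (2 * m + 1) : ℕ) : ℝ) := by
    exact_mod_cast Nat.one_le_iff_ne_zero.mpr (by positivity)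
  simp only [F, Complex.exp_I_mul_phase_odd_multiple hM.ne', Complex.norm_I_sub_one_sq]
  calc _ ≤ _ := inv_le_one_add_sq_rpow_mul_rpow_neg hk (by linarith) (by linarith)
    _ ≤ _ := le_mul_of_one_le_right (by positivity) one_le_two

/-- Divergence of the second Picard iterate for `H^s` potentials (core of Theorem 1.5):
for `s ≥ 0`, `γ > 2`, `1/2 < β < γ − 3/2`, and a positive integer `M₀`, with
`t = (π/2) M₀⁻²`, the series
`Σ_{k≥1} (1+k²)^{s+γ} k^{−(4+2s+2β)} |e^{itk²} − 1|²` diverges. -/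
theorem second_iterate_not_summable_Hs (s γ β : ℝ) (hs : 0 ≤ s) (hγ : 2 < γ)
    (hβ1 : 1 / 2 < β) (hβ2 : β < γ - 3 / 2) (M₀ : ℕ) (hM : 0 < M₀) :
    ¬ Summable (fun k : ℕ =>
      (1 + ((k : ℝ) + 1) ^ 2) ^ (s + γ) *
        ((k : ℝ) + 1) ^ (-(4 + 2 * s + 2 * β)) *
        ‖Complex.exp (Complex.I *
            (((Real.pi / 2) * ((M₀ : ℝ) ^ 2)⁻¹ * ((k : ℝ) + 1) ^ 2 : ℝ) : ℂ)) - 1‖ ^ 2) :=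
  second_iterate_not_summable_Hs_general s γ β hs hγ hβ2 M₀ hM
end

section
/- Key bilinear estimate for the low-regularity integrator (estimate (est:Dh)): There exists a constant C > 0 such that for all τ ∈ (0,1], all bounded sequences ξ̂ : ℤ → ℂ, and all h ∈ ℓ²(ℤ;ℂ), setting G_k = ((1/τ)∫₀^τ e^{isk²} ds) · Σ_{k₁+k₂=k} ξ̂_{k₁} ((1/τ)∫₀^τ e^{−isk₂²} ds) h_{k₂} (the sum converging absolutely), one has (Σ_{k∈ℤ} |G_k|²)^{1/2} ≤ C τ^{−1/2} (sup_{k∈ℤ} |ξ̂_k|) (Σ_{k∈ℤ} |h_k|²)^{1/2}. -/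
/-- The average `(1/τ) ∫₀^τ e^{isα} ds` of a complex exponential. -/
noncomputable def avgExp (τ α : ℝ) : ℂ :=
  (τ : ℂ)⁻¹ * ∫ s in (0 : ℝ)..τ, Complex.exp (Complex.I * (s : ℂ) * (α : ℂ))

/-!
Pulling `sup |ξ̂|` out of the inner sum and applying Cauchy–Schwarz to `∑ⱼ |vⱼ| |hⱼ|`, with
`vⱼ = avgExp τ (-j²)`, bounds `|G_k|` by `B ‖v‖₂ ‖h‖₂ |avgExp τ (k²)|`; hence
`‖G‖₂ ≤ B ‖w‖₂ ‖v‖₂ ‖h‖₂` with `w_k = avgExp τ (k²)`. A multiplier is bounded both by `1` and,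
computing the integral, by `2 / (τ |α|)`, so `|avgExp τ (±k²)|² ≲ (1 + τ k²)⁻¹`, and the integral
test against `∫ (1 + τ x²)⁻¹ dx = π / √τ` gives `‖w‖₂², ‖v‖₂² ≲ τ^{-1/2}`.
-/

open Real MeasureTheory Set

lemma summable_and_tsum_mul_le_sqrt_mul_sqrt {ι : Type*} {f g : ι → ℝ} (hf : ∀ i, 0 ≤ f i)
    (hg : ∀ i, 0 ≤ g i) (hf2 : Summable fun i => f i ^ 2) (hg2 : Summable fun i => g i ^ 2) :
    Summable (fun i => f i * g i) ∧
      ∑' i, f i * g i ≤ √(∑' i, f i ^ 2) * √(∑' i, g i ^ 2) := by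
  simp_rw [← rpow_natCast, sqrt_eq_rpow] at *
  simpa using summable_and_inner_le_Lp_mul_Lq_tsum_of_nonneg .two_two hf hg hf2 hg2

lemma norm_tsum_mul_sub_le {G R : Type*} [AddGroup G] [NormedRing R] {ξ u : G → R} {B : ℝ}
    (hξ : ∀ j, ‖ξ j‖ ≤ B) (hu : Summable fun j => ‖u j‖) (k : G) :
    ‖∑' j, ξ j * u (k - j)‖ ≤ B * ∑' j, ‖u j‖ := by
  have hu' : Summable fun j => ‖u (k - j)‖ := (Equiv.subLeft k).summable_iff.mpr hu
  have hbound : ∀ j, ‖ξ j * u (k - j)‖ ≤ B * ‖u (k - j)‖ := fun j =>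
    (norm_mul_le _ _).trans (by gcongr; exact hξ j)
  have hsum : Summable fun j => ‖ξ j * u (k - j)‖ :=
    .of_nonneg_of_le (fun _ => norm_nonneg _) hbound (hu'.mul_left B)
  calc ‖∑' j, ξ j * u (k - j)‖
      ≤ ∑' j, ‖ξ j * u (k - j)‖ := norm_tsum_le_tsum_norm hsum
    _ ≤ ∑' j, B * ‖u (k - j)‖ := hsum.tsum_le_tsum hbound (hu'.mul_left B)
    _ = B * ∑' j, ‖u j‖ := by
      rw [tsum_mul_left]; exact congrArg (B * ·) ((Equiv.subLeft k).tsum_eq fun j => ‖u j‖)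

lemma summable_and_sqrt_tsum_le_of_norm_le_mul {ι E F : Type*} [SeminormedAddCommGroup E]
    [SeminormedAddCommGroup F] {g : ι → E} {w : ι → F} {c : ℝ} (hc : 0 ≤ c)
    (hw : Summable fun i => ‖w i‖ ^ 2) (hg : ∀ i, ‖g i‖ ≤ ‖w i‖ * c) :
    Summable (fun i => ‖g i‖ ^ 2) ∧ √(∑' i, ‖g i‖ ^ 2) ≤ √(∑' i, ‖w i‖ ^ 2) * c := by
  have hg2 : ∀ i, ‖g i‖ ^ 2 ≤ ‖w i‖ ^ 2 * c ^ 2 := fun i => by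
    rw [← mul_pow]; gcongr; exact hg i
  have hsum : Summable fun i => ‖g i‖ ^ 2 :=
    .of_nonneg_of_le (fun _ => by positivity) hg2 (hw.mul_right _)
  refine ⟨hsum, ?_⟩
  calc √(∑' i, ‖g i‖ ^ 2) ≤ √((∑' i, ‖w i‖ ^ 2) * c ^ 2) := by
        rw [← tsum_mul_right]; exact sqrt_le_sqrt (hsum.tsum_le_tsum hg2 (hw.mul_right _))
    _ = √(∑' i, ‖w i‖ ^ 2) * c := by
        rw [sqrt_mul (tsum_nonneg fun _ => by positivity), sqrt_sq hc]

lemma integral_Ioi_zero_inv_one_add_mul_sq {b : ℝ} (hb : 0 < b) :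
    ∫ x in Ioi (0 : ℝ), (1 + (b * x) ^ 2)⁻¹ = π / (2 * b) := by
  rw [integral_comp_mul_left_Ioi (fun x => (1 + x ^ 2)⁻¹) 0 hb, mul_zero,
    integral_Ioi_inv_one_add_sq, arctan_zero, sub_zero, smul_eq_mul]
  field_simp

lemma summable_and_tsum_nat_inv_one_add_mul_sq_le {b : ℝ} (hb : 0 < b) :
    Summable (fun n : ℕ => (1 + (b * n) ^ 2)⁻¹) ∧
      ∑' n : ℕ, (1 + (b * n) ^ 2)⁻¹ ≤ 1 + π / (2 * b) := by
  set f : ℝ → ℝ := fun x => (1 + (b * x) ^ 2)⁻¹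
  have anti : AntitoneOn f (Ici 0) := fun x hx y hy hxy => by
    have : b * x ≤ b * y := by gcongr
    simp only [f]; gcongr; exact mul_nonneg hb.le hx
  have integrable : IntegrableOn f (Ioi 0) :=
    (integrable_inv_one_add_sq.comp_mul_left' hb.ne').integrableOn
  have nonneg : ∀ t ∈ Ioi (0 : ℝ), 0 ≤ f t := fun t _ => by positivity
  refine ⟨anti.summable_of_integrableOn_Ioi_zero integrable nonneg, ?_⟩
  have := anti.tsum_le_integral integrable nonneg
  simpa [f, integral_Ioi_zero_inv_one_add_mul_sq hb] using this

lemma summable_and_tsum_int_inv_one_add_mul_sq_le {b : ℝ} (hb : 0 < b) :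
    Summable (fun k : ℤ => (1 + (b * k) ^ 2)⁻¹) ∧
      ∑' k : ℤ, (1 + (b * k) ^ 2)⁻¹ ≤ 1 + π / b := by
  obtain ⟨hs, hle⟩ := summable_and_tsum_nat_inv_one_add_mul_sq_le hb
  have hpos : Summable fun n : ℕ => (1 + (b * ((n : ℤ) : ℝ)) ^ 2)⁻¹ := by
    simpa only [Int.cast_natCast] using hs
  have hneg : Summable fun n : ℕ => (1 + (b * ((-n : ℤ) : ℝ)) ^ 2)⁻¹ := by
    simpa only [Int.cast_neg, Int.cast_natCast, mul_neg, neg_sq] using hs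
  set f : ℤ → ℝ := fun k => (1 + (b * k) ^ 2)⁻¹
  refine ⟨.of_nat_of_neg (f := f) hpos hneg, ?_⟩
  rw [Summable.tsum_of_nat_of_neg (f := f) hpos hneg]
  simp only [f, Int.cast_natCast, Int.cast_neg, mul_neg, neg_sq, Int.cast_zero, mul_zero]
  have : π / b = 2 * (π / (2 * b)) := by field_simp
  linarith

lemma norm_avgExp_le_one {τ : ℝ} (hτ : 0 < τ) (α : ℝ) : ‖avgExp τ α‖ ≤ 1 := by
  have hint : ‖∫ s in (0 : ℝ)..τ, Complex.exp (Complex.I * (s : ℂ) * (α : ℂ))‖ ≤ 1 * |τ - 0| :=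
    intervalIntegral.norm_integral_le_of_norm_le_const fun s _ => by
      rw [Complex.norm_exp]; simp
  rw [avgExp, norm_mul, norm_inv, Complex.norm_real, norm_of_nonneg hτ.le]
  rw [one_mul, sub_zero, abs_of_pos hτ] at hint
  calc τ⁻¹ * _ ≤ τ⁻¹ * τ := by gcongr
    _ = 1 := inv_mul_cancel₀ hτ.ne'

lemma norm_avgExp_le_two_div {τ α : ℝ} (hτ : 0 < τ) (hα : α ≠ 0) :
    ‖avgExp τ α‖ ≤ 2 / (τ * |α|) := by
  have hc : Complex.I * α ≠ 0 := by simp [hα]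
  have hint : ∫ s in (0 : ℝ)..τ, Complex.exp (Complex.I * (s : ℂ) * (α : ℂ)) =
      (Complex.exp (Complex.I * τ * α) - 1) / (Complex.I * α) := by
    have hcomm : (fun s : ℝ => Complex.exp (Complex.I * s * α)) =
        fun s : ℝ => Complex.exp (Complex.I * α * s) := by
      funext s; ring_nf
    rw [hcomm, integral_exp_mul_complex hc, Complex.ofReal_zero, mul_zero, Complex.exp_zero,
      mul_right_comm]
  have hnum : ‖Complex.exp (Complex.I * τ * α) - 1‖ ≤ 2 := by
    refine (norm_sub_le _ _).trans ?_
    norm_num [Complex.norm_exp]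
  rw [avgExp, hint, norm_mul, norm_div, norm_inv, Complex.norm_real, norm_of_nonneg hτ.le,
    norm_mul, Complex.norm_I, one_mul, Complex.norm_real, norm_eq_abs, mul_div_assoc',
    inv_mul_eq_div, div_div]
  gcongr

lemma norm_avgExp_le {τ : ℝ} (hτ : 0 < τ) (α : ℝ) : ‖avgExp τ α‖ ≤ 4 / (1 + τ * |α|) := by
  rcases le_or_gt (τ * |α|) 1 with hsmall | hlarge
  · calc ‖avgExp τ α‖ ≤ 1 := norm_avgExp_le_one hτ α
      _ ≤ 4 / (1 + τ * |α|) := by rw [le_div_iff₀ (by positivity)]; linarith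
  · have hα : α ≠ 0 := by rintro rfl; norm_num at hlarge
    calc ‖avgExp τ α‖ ≤ 2 / (τ * |α|) := norm_avgExp_le_two_div hτ hα
      _ ≤ 4 / (1 + τ * |α|) := by rw [div_le_div_iff₀ (by linarith) (by linarith)]; linarith

lemma summable_and_tsum_norm_sq_avgExp_le {τ : ℝ} (hτ : 0 < τ) (hτ1 : τ ≤ 1) {α : ℤ → ℝ}
    (hα : ∀ k, |α k| = (k : ℝ) ^ 2) :
    Summable (fun k => ‖avgExp τ (α k)‖ ^ 2) ∧
      ∑' k, ‖avgExp τ (α k)‖ ^ 2 ≤ 4 * (1 + π) / √τ := by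
  have hsqrt : 0 < √τ := sqrt_pos.mpr hτ
  obtain ⟨hs, hle⟩ := summable_and_tsum_int_inv_one_add_mul_sq_le hsqrt
  have hbound : ∀ k : ℤ, ‖avgExp τ (α k)‖ ^ 2 ≤ 4 * (1 + (√τ * k) ^ 2)⁻¹ := fun k => by
    have h1 := norm_avgExp_le_one hτ (α k)
    calc ‖avgExp τ (α k)‖ ^ 2 ≤ ‖avgExp τ (α k)‖ := by nlinarith [norm_nonneg (avgExp τ (α k))]
      _ ≤ 4 / (1 + τ * |α k|) := norm_avgExp_le hτ (α k)
      _ = 4 * (1 + (√τ * k) ^ 2)⁻¹ := by rw [hα, mul_pow, sq_sqrt hτ.le, div_eq_mul_inv]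
  have hsum := Summable.of_nonneg_of_le (fun _ => by positivity) hbound (hs.mul_left 4)
  refine ⟨hsum, ?_⟩
  have hτ' : 1 ≤ 1 / √τ := by rw [le_div_iff₀ hsqrt, one_mul]; exact sqrt_le_one.mpr hτ1
  calc ∑' k, ‖avgExp τ (α k)‖ ^ 2 ≤ ∑' k : ℤ, 4 * (1 + (√τ * k) ^ 2)⁻¹ :=
        hsum.tsum_le_tsum hbound (hs.mul_left 4)
    _ ≤ 4 * (1 + π / √τ) := by rw [tsum_mul_left]; gcongr
    _ ≤ 4 * (1 + π) / √τ := by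
        rw [mul_div_assoc, add_div, div_eq_mul_one_div π]; gcongr

/-- Key bilinear estimate for the low-regularity integrator (estimate (est:Dh)):
there is `C > 0` such that for all `τ ∈ (0,1]`, all bounded sequences `ξ̂ : ℤ → ℂ`
(with bound `B`), and all `h ∈ ℓ²(ℤ;ℂ)`, the sequence
`G_k = M_τ(e^{isk²}) Σ_{k₁+k₂=k} ξ̂_{k₁} M_τ(e^{−isk₂²}) h_{k₂}` satisfies
`‖G‖_{ℓ²} ≤ C τ^{−1/2} B ‖h‖_{ℓ²}`. -/
theorem bilinear_estimate_Dtau :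
    ∃ C > 0, ∀ τ : ℝ, 0 < τ → τ ≤ 1 → ∀ B : ℝ, ∀ ξ : ℤ → ℂ, (∀ k, ‖ξ k‖ ≤ B) →
      ∀ h : ℤ → ℂ, Summable (fun k : ℤ => ‖h k‖ ^ 2) →
      ∀ G : ℤ → ℂ,
        (∀ k : ℤ, G k = avgExp τ ((k : ℝ) ^ 2) *
            ∑' k₁ : ℤ, ξ k₁ * avgExp τ (-(((k - k₁ : ℤ) : ℝ) ^ 2)) * h (k - k₁)) →
        Summable (fun k : ℤ => ‖G k‖ ^ 2) ∧
        (∑' k : ℤ, ‖G k‖ ^ 2) ^ ((1 : ℝ) / 2) ≤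
          C * τ ^ (-(1 : ℝ) / 2) * B * (∑' k : ℤ, ‖h k‖ ^ 2) ^ ((1 : ℝ) / 2) := by
  refine ⟨4 * (1 + π), by positivity, fun τ hτ hτ1 B ξ hξ h hh G hG => ?_⟩
  set w : ℤ → ℂ := fun k => avgExp τ ((k : ℝ) ^ 2)
  set v : ℤ → ℂ := fun j => avgExp τ (-((j : ℝ) ^ 2))
  obtain ⟨hw, hw_le⟩ := summable_and_tsum_norm_sq_avgExp_le hτ hτ1 (α := fun k => (k : ℝ) ^ 2)
    fun k => abs_of_nonneg (sq_nonneg _)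
  obtain ⟨hv, hv_le⟩ := summable_and_tsum_norm_sq_avgExp_le hτ hτ1 (α := fun k => -(k : ℝ) ^ 2)
    fun k => by rw [abs_neg, abs_of_nonneg (sq_nonneg _)]
  obtain ⟨hvh, hvh_le⟩ := summable_and_tsum_mul_le_sqrt_mul_sqrt (fun j => norm_nonneg (v j))
    (fun j => norm_nonneg (h j)) hv hh
  have hB : 0 ≤ B := (norm_nonneg _).trans (hξ 0)
  have hG_le : ∀ k, ‖G k‖ ≤ ‖w k‖ * (B * ∑' j, ‖v j‖ * ‖h j‖) := fun k => by
    rw [hG k, norm_mul]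
    gcongr
    simpa only [mul_assoc, norm_mul] using
      norm_tsum_mul_sub_le hξ (u := fun j => v j * h j) (by simpa only [norm_mul] using hvh) k
  obtain ⟨hGs, hG_sqrt⟩ := summable_and_sqrt_tsum_le_of_norm_le_mul (by positivity) hw hG_le
  have hwv : √(∑' k, ‖w k‖ ^ 2) * √(∑' j, ‖v j‖ ^ 2) ≤ 4 * (1 + π) / √τ :=
    calc _ ≤ √(4 * (1 + π) / √τ) * √(4 * (1 + π) / √τ) := by gcongr
      _ = 4 * (1 + π) / √τ := mul_self_sqrt (by positivity)
  refine ⟨hGs, ?_⟩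
  rw [← sqrt_eq_rpow, ← sqrt_eq_rpow, neg_div, rpow_neg hτ.le, ← sqrt_eq_rpow, ← div_eq_mul_inv]
  calc √(∑' k, ‖G k‖ ^ 2) ≤ √(∑' k, ‖w k‖ ^ 2) * (B * ∑' j, ‖v j‖ * ‖h j‖) := hG_sqrt
    _ ≤ √(∑' k, ‖w k‖ ^ 2) * (B * (√(∑' j, ‖v j‖ ^ 2) * √(∑' k, ‖h k‖ ^ 2))) := by gcongr
    _ = √(∑' k, ‖w k‖ ^ 2) * √(∑' j, ‖v j‖ ^ 2) * B * √(∑' k, ‖h k‖ ^ 2) := by ring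
    _ ≤ 4 * (1 + π) / √τ * B * √(∑' k, ‖h k‖ ^ 2) := by gcongr
end
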